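/- Let {x, x₁} be a Bertrand D-pair with constant λ ≠ 0, correspondence s and angle function θ. Assume x is an asymptotic line (k_n ≡ 0) and x₁ is a geodesic (k_{g₁} ≡ 0). Then for every s₁ one has λ τ_{g₁}'(s₁) = −k_{n₁}(s₁) · (1 + λ² τ_{g₁}(s₁)²). -/

import Mathlib

noncomputable section

abbrev E3 := EuclideanSpace ℝ (Fin 3)

/-- Cross product on `EuclideanSpace ℝ (Fin 3)`. -/
def cross3 (a b : E3) : E3 :=
  WithLp.toLp 2 ![a 1 * b 2 - a 2 * b 1, a 2 * b 0 - a 0 * b 2, a 0 * b 1 - a 1 * b 0]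

/-- Darboux frame vector `g = n × T`, where `T = x'`. -/
def gvec (x n : ℝ → E3) : ℝ → E3 := fun t => cross3 (n t) (deriv x t)

/-- Geodesic curvature `k_g = ⟪T', g⟫`. -/
def geodCurv (x n : ℝ → E3) : ℝ → ℝ := fun t => (inner ℝ (deriv (deriv x) t) (gvec x n t) : ℝ)

/-- Normal curvature `k_n = ⟪T', n⟫`. -/
def normCurv (x n : ℝ → E3) : ℝ → ℝ := fun t => (inner ℝ (deriv (deriv x) t) (n t) : ℝ)

/-- Geodesic torsion `τ_g = ⟪g', n⟫`. -/
def geodTors (x n : ℝ → E3) : ℝ → ℝ := fun t => (inner ℝ (deriv (gvec x n) t) (n t) : ℝ)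

/-- A unit-speed smooth curve `x` on an oriented surface, encoded by a smooth unit
normal field `n` along `x` orthogonal to the tangent. -/
def IsDarbouxCurve (x n : ℝ → E3) : Prop :=
  ContDiff ℝ (⊤ : ℕ∞) x ∧ ContDiff ℝ (⊤ : ℕ∞) n ∧ (∀ t, ‖deriv x t‖ = 1) ∧ (∀ t, ‖n t‖ = 1) ∧
    ∀ t, (inner ℝ (n t) (deriv x t) : ℝ) = 0

/-- `{x, x₁}` is a Bertrand D-pair with constant `lam ≠ 0`, smooth increasing
correspondence `s` and smooth angle function `θ`. -/
def IsBertrandDPair (x n x₁ n₁ : ℝ → E3) (lam : ℝ) (s θ : ℝ → ℝ) : Prop :=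
  IsDarbouxCurve x n ∧ IsDarbouxCurve x₁ n₁ ∧ lam ≠ 0 ∧
    ContDiff ℝ (⊤ : ℕ∞) s ∧ (∀ t, 0 < deriv s t) ∧
    (∀ t, x (s t) = x₁ t + lam • gvec x₁ n₁ t) ∧
    (∀ t, gvec x n (s t) = gvec x₁ n₁ t) ∧
    ContDiff ℝ (⊤ : ℕ∞) θ ∧
    (∀ t, deriv x (s t) = Real.cos (θ t) • deriv x₁ t - Real.sin (θ t) • n₁ t) ∧
    (∀ t, n (s t) = Real.sin (θ t) • deriv x₁ t + Real.cos (θ t) • n₁ t)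

/- ## Auxiliary lemmas -/

lemma inner3 (u v : E3) : (inner ℝ u v : ℝ) = u 0 * v 0 + u 1 * v 1 + u 2 * v 2 := by
  simp [PiLp.inner_apply, Fin.sum_univ_three, RCLike.inner_apply, mul_comm]

lemma inner_cross3_right (a b : E3) : (inner ℝ (cross3 a b) b : ℝ) = 0 := by
  rw [inner3]
  show (a 1 * b 2 - a 2 * b 1) * b 0 + (a 2 * b 0 - a 0 * b 2) * b 1
      + (a 0 * b 1 - a 1 * b 0) * b 2 = 0
  ring

lemma contDiff_comp_component {f : ℝ → E3} (hf : ContDiff ℝ (⊤ : ℕ∞) f) (i : Fin 3) :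
    ContDiff ℝ (⊤ : ℕ∞) fun t => f t i := contDiff_euclidean.mp hf i

lemma cross3_contDiff {f g : ℝ → E3} (hf : ContDiff ℝ (⊤ : ℕ∞) f)
    (hg : ContDiff ℝ (⊤ : ℕ∞) g) :
    ContDiff ℝ (⊤ : ℕ∞) fun t => cross3 (f t) (g t) := by
  rw [contDiff_euclidean]
  intro i
  fin_cases i <;> simp only [cross3]
  · exact ((contDiff_comp_component hf 1).mul (contDiff_comp_component hg 2)).sub
      ((contDiff_comp_component hf 2).mul (contDiff_comp_component hg 1))
  · exact ((contDiff_comp_component hf 2).mul (contDiff_comp_component hg 0)).sub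
      ((contDiff_comp_component hf 0).mul (contDiff_comp_component hg 2))
  · exact ((contDiff_comp_component hf 0).mul (contDiff_comp_component hg 1)).sub
      ((contDiff_comp_component hf 1).mul (contDiff_comp_component hg 0))

/-- If `⟪f, g⟫ ≡ c` then at any point `⟪f t, g' t⟫ + ⟪f' t, g t⟫ = 0`. -/
lemma inner_deriv_eq_zero {f g : ℝ → E3} {c : ℝ} (hf : Differentiable ℝ f)
    (hg : Differentiable ℝ g) (h : ∀ u, (inner ℝ (f u) (g u) : ℝ) = c) (t : ℝ) :
    (inner ℝ (f t) (deriv g t) : ℝ) + (inner ℝ (deriv f t) (g t) : ℝ) = 0 := by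
  have h1 : HasDerivAt (fun u => (inner ℝ (f u) (g u) : ℝ))
      ((inner ℝ (f t) (deriv g t) : ℝ) + (inner ℝ (deriv f t) (g t) : ℝ)) t :=
    (hf t).hasDerivAt.inner ℝ (hg t).hasDerivAt
  have h2 : HasDerivAt (fun u => (inner ℝ (f u) (g u) : ℝ)) 0 t := by
    have he : (fun u => (inner ℝ (f u) (g u) : ℝ)) = fun _ => c := funext h
    rw [he]; exact hasDerivAt_const t c
  exact h1.unique h2

theorem bertrand_D_stmt_2
    (x n x₁ n₁ : ℝ → E3) (lam : ℝ) (s θ : ℝ → ℝ)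
    (hpair : IsBertrandDPair x n x₁ n₁ lam s θ)
    (hasym : ∀ t, normCurv x n t = 0) (hgeo₁ : ∀ t, geodCurv x₁ n₁ t = 0) :
    ∀ t, lam * deriv (geodTors x₁ n₁) t = -(normCurv x₁ n₁ t) * (1 + lam ^ 2 * (geodTors x₁ n₁ t) ^ 2) := by
  obtain ⟨⟨hx, hn, hxT, hxN, hxO⟩, ⟨hx₁, hn₁, hx₁T, hx₁N, hx₁O⟩, hlam, hs, hspos,
    hposrel, hgrel, hθc, hTrel, hNrel⟩ := hpair
  have htop : ((⊤ : ℕ∞) : WithTop ℕ∞) ≠ 0 := by simp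
  have hxd : Differentiable ℝ x := (hx.of_le (by simp)).differentiable htop
  have hnd : Differentiable ℝ n := (hn.of_le (by simp)).differentiable htop
  have hx₁d : Differentiable ℝ x₁ := (hx₁.of_le (by simp)).differentiable htop
  have hn₁d : Differentiable ℝ n₁ := (hn₁.of_le (by simp)).differentiable htop
  have hsd : Differentiable ℝ s := (hs.of_le (by simp)).differentiable htop
  have hθd : Differentiable ℝ θ := (hθc.of_le (by simp)).differentiable htop
  have hT₁c : ContDiff ℝ (⊤ : ℕ∞) (deriv x₁) :=
    (contDiff_infty_iff_deriv.mp (hx₁.of_le (by simp))).2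
  have hT₁d : Differentiable ℝ (deriv x₁) := hT₁c.differentiable htop
  have hTc : ContDiff ℝ (⊤ : ℕ∞) (deriv x) :=
    (contDiff_infty_iff_deriv.mp (hx.of_le (by simp))).2
  have hTd : Differentiable ℝ (deriv x) := hTc.differentiable htop
  have hG₁c : ContDiff ℝ (⊤ : ℕ∞) (gvec x₁ n₁) :=
    cross3_contDiff (hn₁.of_le (by simp)) hT₁c
  have hG₁d : Differentiable ℝ (gvec x₁ n₁) := hG₁c.differentiable htop
  have hG₁'c : ContDiff ℝ (⊤ : ℕ∞) (deriv (gvec x₁ n₁)) :=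
    (contDiff_infty_iff_deriv.mp hG₁c).2
  have hτd : Differentiable ℝ (geodTors x₁ n₁) := by
    have h := (ContDiff.inner ℝ hG₁'c (hn₁.of_le (by simp))).differentiable htop
    exact h
  -- pointwise inner facts
  have pT₁ : ∀ u, (inner ℝ (deriv x₁ u) (deriv x₁ u) : ℝ) = 1 := fun u => by
    rw [real_inner_self_eq_norm_sq, hx₁T u]; norm_num
  have pN₁ : ∀ u, (inner ℝ (n₁ u) (n₁ u) : ℝ) = 1 := fun u => by
    rw [real_inner_self_eq_norm_sq, hx₁N u]; norm_num
  have pN : ∀ u, (inner ℝ (n u) (n u) : ℝ) = 1 := fun u => by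
    rw [real_inner_self_eq_norm_sq, hxN u]; norm_num
  have pG₁T₁ : ∀ u, (inner ℝ (gvec x₁ n₁ u) (deriv x₁ u) : ℝ) = 0 := fun u =>
    inner_cross3_right (n₁ u) (deriv x₁ u)
  -- ⟪G₁', T₁⟫ = 0 (geodesic condition for x₁)
  have F1 : ∀ u, (inner ℝ (deriv (gvec x₁ n₁) u) (deriv x₁ u) : ℝ) = 0 := by
    intro u
    have h := inner_deriv_eq_zero hG₁d hT₁d pG₁T₁ u
    have hk := hgeo₁ u
    simp only [geodCurv] at hk
    rw [real_inner_comm] at hk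
    linarith
  -- ⟪T₁', T₁⟫ = 0
  have F4 : ∀ u, (inner ℝ (deriv (deriv x₁) u) (deriv x₁ u) : ℝ) = 0 := by
    intro u
    have h := inner_deriv_eq_zero hT₁d hT₁d pT₁ u
    have hc := real_inner_comm (deriv x₁ u) (deriv (deriv x₁) u)
    linarith
  -- ⟪n₁', T₁⟫ = -k_{n₁}
  have F5 : ∀ u, (inner ℝ (deriv n₁ u) (deriv x₁ u) : ℝ) = -(normCurv x₁ n₁ u) := by
    intro u
    have h := inner_deriv_eq_zero hn₁d hT₁d hx₁O u
    have hk : normCurv x₁ n₁ u = (inner ℝ (n₁ u) (deriv (deriv x₁) u) : ℝ) := by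
      simp only [normCurv]; exact real_inner_comm _ _
    linarith
  -- ⟪n', T⟫ = 0 (asymptotic condition for x)
  have F2 : ∀ u, (inner ℝ (deriv n u) (deriv x u) : ℝ) = 0 := by
    intro u
    have h := inner_deriv_eq_zero hnd hTd hxO u
    have hk := hasym u
    simp only [normCurv] at hk
    rw [real_inner_comm] at hk
    linarith
  -- ⟪n', n⟫ = 0
  have F3 : ∀ u, (inner ℝ (deriv n u) (n u) : ℝ) = 0 := by
    intro u
    have h := inner_deriv_eq_zero hnd hnd pN u
    have hc := real_inner_comm (n u) (deriv n u)
    linarith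
  -- derivative of the correspondence relation
  have E1 : ∀ u, deriv s u • deriv x (s u) = deriv x₁ u + lam • deriv (gvec x₁ n₁) u := by
    intro u
    have h1 : HasDerivAt (fun v => x (s v)) (deriv s u • deriv x (s u)) u := by
      have h := HasDerivAt.scomp (x := u) (h := s) ((hxd (s u)).hasDerivAt) ((hsd u).hasDerivAt)
      exact h
    have h2 : HasDerivAt (fun v => x (s v)) (deriv x₁ u + lam • deriv (gvec x₁ n₁) u) u := by
      have he : (fun v => x (s v)) = fun v => x₁ v + lam • gvec x₁ n₁ v := funext hposrel
      rw [he]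
      exact ((hx₁d u).hasDerivAt).add (((hG₁d u).hasDerivAt).const_smul lam)
    exact h1.unique h2
  -- s' cos θ = 1
  have H1 : ∀ u, deriv s u * Real.cos (θ u) = 1 := by
    intro u
    have e1 := E1 u
    rw [hTrel u] at e1
    have e := congrArg (fun v : E3 => (inner ℝ v (deriv x₁ u) : ℝ)) e1
    simp only [inner_add_left, inner_sub_left, real_inner_smul_left, pT₁ u, hx₁O u,
      F1 u, pG₁T₁ u, mul_zero, mul_one, sub_zero, add_zero] at e
    exact e
  -- s' sin θ = -(lam τ)
  have H2 : ∀ u, deriv s u * Real.sin (θ u) = -(lam * geodTors x₁ n₁ u) := by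
    intro u
    have e1 := E1 u
    rw [hTrel u] at e1
    have e := congrArg (fun v : E3 => (inner ℝ v (n₁ u) : ℝ)) e1
    have hT₁n₁ : (inner ℝ (deriv x₁ u) (n₁ u) : ℝ) = 0 := by
      rw [real_inner_comm]; exact hx₁O u
    have hτu : (inner ℝ (deriv (gvec x₁ n₁) u) (n₁ u) : ℝ) = geodTors x₁ n₁ u := rfl
    simp only [inner_add_left, inner_sub_left, real_inner_smul_left, hT₁n₁, pN₁ u, hτu,
      mul_zero, mul_one, zero_sub, zero_add] at e
    linarith
  -- sin θ = -(lam τ) cos θ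
  have H4 : ∀ u, Real.sin (θ u) = -(lam * geodTors x₁ n₁ u) * Real.cos (θ u) := by
    intro u
    linear_combination Real.cos (θ u) * H2 u - Real.sin (θ u) * H1 u
  intro t
  have hc_ne : Real.cos (θ t) ≠ 0 := by
    intro h0
    have h1 := H1 t
    rw [h0, mul_zero] at h1
    exact zero_ne_one h1
  have hsin : HasDerivAt (fun v => Real.sin (θ v)) (Real.cos (θ t) * deriv θ t) t :=
    ((hθd t).hasDerivAt).sin
  have hcos : HasDerivAt (fun v => Real.cos (θ v)) (-Real.sin (θ t) * deriv θ t) t :=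
    ((hθd t).hasDerivAt).cos
  -- θ' = k_{n₁}
  have H3 : deriv θ t = normCurv x₁ n₁ t := by
    have hψ1 : HasDerivAt (fun v => n (s v)) (deriv s t • deriv n (s t)) t := by
      have h := HasDerivAt.scomp (x := t) (h := s) ((hnd (s t)).hasDerivAt) ((hsd t).hasDerivAt)
      exact h
    have hψ2 : HasDerivAt (fun v => n (s v))
        ((Real.sin (θ t) • deriv (deriv x₁) t + (Real.cos (θ t) * deriv θ t) • deriv x₁ t) +
         (Real.cos (θ t) • deriv n₁ t + (-Real.sin (θ t) * deriv θ t) • n₁ t)) t := by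
      have he : (fun v => n (s v))
          = fun v => Real.sin (θ v) • deriv x₁ v + Real.cos (θ v) • n₁ v := funext hNrel
      rw [he]
      exact (hsin.smul ((hT₁d t).hasDerivAt)).add (hcos.smul ((hn₁d t).hasDerivAt))
    have E2 := hψ1.unique hψ2
    have hrec : Real.cos (θ t) • deriv x (s t) + Real.sin (θ t) • n (s t) = deriv x₁ t := by
      rw [hTrel t, hNrel t]
      have hcs : Real.cos (θ t) ^ 2 + Real.sin (θ t) ^ 2 = 1 := by
        rw [add_comm]; exact Real.sin_sq_add_cos_sq (θ t)
      match_scalars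
      · linear_combination hcs
      · ring
    have hnT₁ : (inner ℝ (deriv n (s t)) (deriv x₁ t) : ℝ) = 0 := by
      rw [← hrec, inner_add_right, real_inner_smul_right, real_inner_smul_right,
        F2 (s t), F3 (s t)]
      ring
    have e := congrArg (fun v : E3 => (inner ℝ v (deriv x₁ t) : ℝ)) E2
    simp only [inner_add_left, real_inner_smul_left, hnT₁, F4 t, pT₁ t, F5 t] at e
    have hT₁n₁' : (inner ℝ (n₁ t) (deriv x₁ t) : ℝ) = 0 := hx₁O t
    rw [hT₁n₁'] at e
    have e' : Real.cos (θ t) * deriv θ t = Real.cos (θ t) * normCurv x₁ n₁ t := by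
      ring_nf at e ⊢
      linarith
    exact mul_left_cancel₀ hc_ne e'
  -- differentiate sin θ + (lam τ) cos θ ≡ 0
  have hτ't : HasDerivAt (geodTors x₁ n₁) (deriv (geodTors x₁ n₁) t) t := (hτd t).hasDerivAt
  have hF1 : HasDerivAt (fun u => Real.sin (θ u) + (lam * geodTors x₁ n₁ u) * Real.cos (θ u))
      ((Real.cos (θ t) * deriv θ t) + ((lam * deriv (geodTors x₁ n₁) t) * Real.cos (θ t)
        + (lam * geodTors x₁ n₁ t) * (-Real.sin (θ t) * deriv θ t))) t :=
    hsin.add ((hτ't.const_mul lam).mul hcos)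
  have hF2 : HasDerivAt (fun u => Real.sin (θ u) + (lam * geodTors x₁ n₁ u) * Real.cos (θ u))
      0 t := by
    have he : (fun u => Real.sin (θ u) + (lam * geodTors x₁ n₁ u) * Real.cos (θ u))
        = fun _ => (0 : ℝ) := funext fun u => by linear_combination H4 u
    rw [he]; exact hasDerivAt_const t 0
  have E3eq := hF1.unique hF2
  rw [H3, H4 t] at E3eq
  have key : Real.cos (θ t) * (lam * deriv (geodTors x₁ n₁) t
      + normCurv x₁ n₁ t * (1 + lam ^ 2 * (geodTors x₁ n₁ t) ^ 2)) = 0 := by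
    linear_combination E3eq
  rcases mul_eq_zero.mp key with h2 | h2
  · exact absurd h2 hc_ne
  · linarith
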